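/- arXiv:2403.15763 — 5 statements merged into one kernel-verified Lean document; each statement's English description precedes it below -/
import Mathlib

section
/- Let m be a natural number and let x : Fin m → ℤ satisfy that x i is even for every i. Then the set S(x) := { ∑ i, (x i / 2 + c i)^2 : c : Fin m → ℤ with c i odd for every i } of integers has a least element, and this least element equals the number of indices i for which 4 divides x i. Consequently η(x) := (least element of S(x)) − m equals −(the number of indices i with x i ≡ 2 (mod 4)); in particular η(x) ≤ 0. -/
/-- For an even vector `x : Fin m → ℤ`, the set
`{ ∑ i, (x i / 2 + c i)^2 : c with all c i odd }` has a least element, equal to the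
number of indices with `4 ∣ x i`; consequently `η(x) = least − m = −#{i : x i ≡ 2 [4]} ≤ 0`. -/
theorem eta_least_and_value (m : ℕ) (x : Fin m → ℤ) (hx : ∀ i, Even (x i)) :
    IsLeast
      {s : ℤ | ∃ c : Fin m → ℤ, (∀ i, Odd (c i)) ∧ s = ∑ i, (x i / 2 + c i) ^ 2}
      ((Finset.univ.filter (fun i => (4 : ℤ) ∣ x i)).card : ℤ) ∧
    ((Finset.univ.filter (fun i => (4 : ℤ) ∣ x i)).card : ℤ) - (m : ℤ) =
      -((Finset.univ.filter (fun i => x i % 4 = 2)).card : ℤ) ∧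
    ((Finset.univ.filter (fun i => (4 : ℤ) ∣ x i)).card : ℤ) - (m : ℤ) ≤ 0 := by
  classical
  have hcard : ((Finset.univ.filter (fun i => (4 : ℤ) ∣ x i)).card : ℤ)
      = ∑ i : Fin m, (if (4 : ℤ) ∣ x i then (1 : ℤ) else 0) := by
    rw [Finset.card_eq_sum_ones, ← Finset.sum_filter]
    push_cast
    rfl
  refine ⟨⟨?_, ?_⟩, ?_, ?_⟩
  · refine ⟨fun i => if (4 : ℤ) ∣ x i then 1 - x i / 2 else -(x i / 2), ?_, ?_⟩
    · intro i
      obtain ⟨k, hk⟩ := hx i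
      rw [Int.odd_iff]
      by_cases h : (4 : ℤ) ∣ x i <;> simp only [h, if_true, if_false] <;> omega
    · rw [hcard]
      apply Finset.sum_congr rfl
      intro i _
      by_cases h : (4 : ℤ) ∣ x i <;> simp [h]
  · rintro s ⟨c, hodd, rfl⟩
    rw [hcard]
    apply Finset.sum_le_sum
    intro i _
    by_cases h : (4 : ℤ) ∣ x i
    · simp only [h, if_true]
      obtain ⟨t, ht⟩ := hodd i
      obtain ⟨u, hu⟩ : ∃ u, x i / 2 = 2 * u := by
        obtain ⟨v, hv⟩ := h
        exact ⟨v, by omega⟩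
      rw [hu, ht]
      have h0 : (2 * u + (2 * t + 1)) ≠ 0 := by omega
      have h1 : (1 : ℤ) ≤ |2 * u + (2 * t + 1)| := Int.one_le_abs h0
      nlinarith [sq_abs (2 * u + (2 * t + 1))]
    · simp only [h, if_false]
      positivity
  · have hfil : (Finset.univ.filter (fun i => x i % 4 = 2))
        = Finset.univ.filter (fun i => ¬ (4 : ℤ) ∣ x i) := by
      apply Finset.filter_congr
      intro i _
      obtain ⟨k, hk⟩ := hx i
      constructor <;> intro h <;> omega
    rw [hfil]
    have := Finset.card_filter_add_card_filter_not
      (s := (Finset.univ : Finset (Fin m))) (p := fun i => (4 : ℤ) ∣ x i)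
    rw [Finset.card_univ, Fintype.card_fin] at this
    push_cast [← this]
    ring
  · have h1 : (Finset.univ.filter (fun i => (4 : ℤ) ∣ x i)).card ≤ m := by
      simpa using (Finset.card_filter_le Finset.univ (fun i => (4 : ℤ) ∣ x i))
    omega
end

section
/- Let m be a natural number and let x : Fin m → ℤ satisfy that x i is even for every i. If ∑ i, (x i + 2)^2 ≤ 4 · (the number of indices i for which 4 divides x i), then for every i one has x i = 0 or x i = −2 or x i = −4. -/
/-- If `x : Fin m → ℤ` has all entries even and `∑ (x i + 2)^2 ≤ 4·#{i : 4 ∣ x i}`,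
then every entry is `0`, `−2`, or `−4`. -/
theorem even_vector_entries_of_sum_sq_le (m : ℕ) (x : Fin m → ℤ) (hx : ∀ i, Even (x i))
    (h : ∑ i, (x i + 2) ^ 2 ≤
      4 * ((Finset.univ.filter (fun i => (4 : ℤ) ∣ x i)).card : ℤ)) :
    ∀ i, x i = 0 ∨ x i = -2 ∨ x i = -4 := by
  set g : Fin m → ℤ := fun i => (x i + 2) ^ 2 - (if (4 : ℤ) ∣ x i then 4 else 0) with hg
  have hcard : ∑ i, (if (4 : ℤ) ∣ x i then (4 : ℤ) else 0) =
      4 * ((Finset.univ.filter (fun i => (4 : ℤ) ∣ x i)).card : ℤ) := by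
    rw [← Finset.sum_filter, Finset.sum_const]
    push_cast
    ring
  have hsum : ∑ i, g i ≤ 0 := by
    have : ∑ i, g i = ∑ i, (x i + 2) ^ 2 -
        ∑ i, (if (4 : ℤ) ∣ x i then (4 : ℤ) else 0) := by
      rw [← Finset.sum_sub_distrib]
    rw [this, hcard]
    linarith
  have hnn : ∀ i ∈ Finset.univ, 0 ≤ g i := by
    intro i _
    simp only [hg]
    by_cases hd : (4 : ℤ) ∣ x i
    · simp only [if_pos hd]
      obtain ⟨k, hk⟩ := hd
      rw [hk]
      rcases le_or_gt 0 k with hk2 | hk2 <;> nlinarith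
    · simp only [if_neg hd, sub_zero]
      positivity
  have hzero : ∀ i ∈ Finset.univ, g i = 0 := by
    rw [← Finset.sum_eq_zero_iff_of_nonneg hnn]
    exact le_antisymm hsum (Finset.sum_nonneg hnn)
  intro i
  have hgi := hzero i (Finset.mem_univ i)
  simp only [hg] at hgi
  by_cases hd : (4 : ℤ) ∣ x i
  · rw [if_pos hd] at hgi
    have : x i * (x i + 4) = 0 := by linear_combination hgi
    rcases mul_eq_zero.mp this with h1 | h1
    · exact Or.inl h1
    · exact Or.inr (Or.inr (by linarith))
  · rw [if_neg hd] at hgi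
    have : x i + 2 = 0 := by
      have := pow_eq_zero_iff (n := 2) (by norm_num) |>.mp (by linarith : (x i + 2) ^ 2 = 0)
      exact this
    exact Or.inr (Or.inl (by linarith))
end

section
/- Let m be a natural number, let x : Fin m → ℤ satisfy that x i is even for every i, and let η(x) denote the least element of the set { (∑ i, (x i / 2 + c i)^2) − m : c : Fin m → ℤ with c i odd for every i } of integers. If, in ℚ, (1/8) · ∑ i, (x i)^2 − (1/2) · η(x) ≤ −(1/2) · ∑ i, x i, then for every i one has x i = 0 or x i = −2 or x i = −4. -/
/-- Arithmetic content of Corollary 1.2: if `x : Fin m → ℤ` has all entries even,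
`η` is the least element of `{ (∑ i, (x i / 2 + c i)^2) − m : all c i odd }`, and
`(1/8)·∑ (x i)² − (1/2)·η ≤ −(1/2)·∑ x i` in `ℚ`, then every `x i ∈ {0, −2, −4}`. -/
theorem entries_of_eta_inequality (m : ℕ) (x : Fin m → ℤ) (hx : ∀ i, Even (x i)) (η : ℤ)
    (hη : IsLeast
      {s : ℤ | ∃ c : Fin m → ℤ, (∀ i, Odd (c i)) ∧
        s = (∑ i, (x i / 2 + c i) ^ 2) - (m : ℤ)} η)
    (h : (1 / 8 : ℚ) * ∑ i, (x i : ℚ) ^ 2 - (1 / 2 : ℚ) * (η : ℚ) ≤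
      -(1 / 2 : ℚ) * ∑ i, (x i : ℚ)) :
    ∀ i, x i = 0 ∨ x i = -2 ∨ x i = -4 := by
  set y : Fin m → ℤ := fun i => x i / 2 with hy
  have hxy : ∀ i, x i = 2 * y i := by
    intro i
    have h2 : (2 : ℤ) ∣ x i := (hx i).two_dvd
    simp [hy, Int.mul_ediv_cancel' h2]
  -- integer form of the hypothesis
  have hA : (∑ i, (x i : ℚ) ^ 2) = 4 * ((∑ i, (y i) ^ 2 : ℤ) : ℚ) := by
    push_cast
    rw [Finset.mul_sum]
    refine Finset.sum_congr rfl fun i _ => ?_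
    rw [show ((x i : ℚ)) = 2 * (y i : ℚ) by exact_mod_cast congrArg (Int.cast : ℤ → ℚ) (hxy i)]
    ring
  have hB : (∑ i, (x i : ℚ)) = 2 * ((∑ i, y i : ℤ) : ℚ) := by
    push_cast
    rw [Finset.mul_sum]
    refine Finset.sum_congr rfl fun i _ => ?_
    exact_mod_cast congrArg (Int.cast : ℤ → ℚ) (hxy i)
  have hkey : (∑ i, (y i) ^ 2) + 2 * (∑ i, y i) ≤ η := by
    have : ((∑ i, (y i) ^ 2 : ℤ) : ℚ) + 2 * ((∑ i, y i : ℤ) : ℚ) ≤ ((η : ℤ) : ℚ) := by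
      rw [hA, hB] at h; linarith
    exact_mod_cast this
  -- upper bound for η using a good choice of c
  set c₀ : Fin m → ℤ := fun i => if Even (y i) then 1 - y i else - y i with hc₀
  have hodd : ∀ i, Odd (c₀ i) := by
    intro i
    by_cases hE : Even (y i)
    · simp only [hc₀, if_pos hE]
      rcases hE with ⟨k, hk⟩
      exact ⟨-k, by omega⟩
    · simp only [hc₀, if_neg hE]
      rw [Int.not_even_iff_odd] at hE
      rcases hE with ⟨k, hk⟩
      exact ⟨-k - 1, by omega⟩
  have hsq : ∀ i, (y i + c₀ i) ^ 2 = (if Even (y i) then 1 else 0) := by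
    intro i
    by_cases hE : Even (y i) <;> simp [hc₀, hE]
  have hmem : (∑ i, (if Even (y i) then (1:ℤ) else 0)) - (m : ℤ) ∈
      {s : ℤ | ∃ c : Fin m → ℤ, (∀ i, Odd (c i)) ∧
        s = (∑ i, (x i / 2 + c i) ^ 2) - (m : ℤ)} := by
    refine ⟨c₀, hodd, ?_⟩
    rw [show (∑ i, (x i / 2 + c₀ i) ^ 2) = ∑ i, (if Even (y i) then (1:ℤ) else 0) from
      Finset.sum_congr rfl fun i _ => hsq i]
  have hupper : η ≤ (∑ i, (if Even (y i) then (1:ℤ) else 0)) - (m : ℤ) := hη.2 hmem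
  -- combine
  have hsum0 : ∑ i, ((y i + 1) ^ 2 - (if Even (y i) then (1:ℤ) else 0)) ≤ 0 := by
    have hexp : ∑ i, ((y i + 1) ^ 2 - (if Even (y i) then (1:ℤ) else 0))
        = ((∑ i, (y i) ^ 2) + 2 * (∑ i, y i) + (m : ℤ))
          - (∑ i, (if Even (y i) then (1:ℤ) else 0)) := by
      rw [Finset.sum_sub_distrib]
      congr 1
      have : ∑ i, ((y i + 1) ^ 2) = ∑ i, ((y i) ^ 2 + 2 * y i + 1) :=
        Finset.sum_congr rfl fun i _ => by ring
      rw [this, Finset.sum_add_distrib, Finset.sum_add_distrib, ← Finset.mul_sum]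
      simp
    omega
  have hnn : ∀ i ∈ Finset.univ, (0:ℤ) ≤ (y i + 1) ^ 2 - (if Even (y i) then (1:ℤ) else 0) := by
    intro i _
    by_cases hE : Even (y i)
    · simp only [if_pos hE]
      have : y i + 1 ≠ 0 := by
        intro hc; rw [show y i = -1 by omega] at hE; exact (by decide : ¬ Even (-1:ℤ)) hE
      nlinarith [Int.one_le_abs this, sq_abs (y i + 1)]
    · simp only [if_neg hE]
      nlinarith [sq_nonneg (y i + 1)]
  have hall : ∀ i ∈ Finset.univ, (y i + 1) ^ 2 - (if Even (y i) then (1:ℤ) else 0) = 0 := by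
    have hle := Finset.sum_nonneg hnn
    have hz : ∑ i, ((y i + 1) ^ 2 - (if Even (y i) then (1:ℤ) else 0)) = 0 := le_antisymm hsum0 hle
    exact (Finset.sum_eq_zero_iff_of_nonneg hnn).mp hz
  intro i
  have hi := hall i (Finset.mem_univ i)
  have hxi := hxy i
  by_cases hE : Even (y i)
  · simp only [if_pos hE] at hi
    have : (y i + 1) ^ 2 = 1 := by omega
    have h1 : (y i) * (y i + 2) = 0 := by nlinarith
    rcases mul_eq_zero.mp h1 with h0 | h2
    · left; omega
    · right; right; omega
  · simp only [if_neg hE] at hi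
    have : y i = -1 := by nlinarith [sq_nonneg (y i + 1)]
    right; left; omega
end

section
/- Fix N ∈ ℤ. Let V : ℤ → Type be a family of additive commutative groups such that V i is trivial for every i < N, and let U be a family of additive homomorphisms U i : V i → V (i+2); write U^{(n)} : V i → V (i+2n) for the n-fold composite U (i+2(n−1)) ∘ ⋯ ∘ U (i+2) ∘ U i. Assume that the set of pairs (i, x) with x ∈ V i, x ≠ 0 and U i x = 0 is finite. Then there exists n₀ ∈ ℕ such that for every i ∈ ℤ and every x ∈ V i, if U^{(n)} x = 0 for some n ≥ 1, then U^{(n₀)} x = 0. -/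
/-- The `n`-fold composite `U (i+2(n−1)) ∘ ⋯ ∘ U (i+2) ∘ U i : V i → V (i + 2n)`. -/
def iterU {V : ℤ → Type*} [∀ i, AddCommGroup (V i)]
    (U : ∀ i : ℤ, V i →+ V (i + 2)) : (n : ℕ) → (i : ℤ) → V i → V (i + 2 * n)
  | 0, i, x => cast (congrArg V (by push_cast; ring)) x
  | (n + 1), i, x => cast (congrArg V (show i + 2 + 2 * (n : ℤ) = i + 2 * ((n : ℕ) + 1 : ℕ) by
      push_cast; ring)) (iterU U n (i + 2) (U i x))

/-- The shift map on the total space of the graded family. -/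
def Tmap {V : ℤ → Type} [∀ i, AddCommGroup (V i)]
    (U : ∀ i : ℤ, V i →+ V (i + 2)) : (Σ i : ℤ, V i) → (Σ i : ℤ, V i) :=
  fun p => ⟨p.1 + 2, U p.1 p.2⟩

lemma sigma_cast {V : ℤ → Type} [∀ i, AddCommGroup (V i)] {i j : ℤ} (h : i = j) (x : V i) :
    (⟨j, cast (congrArg V h) x⟩ : Σ i : ℤ, V i) = ⟨i, x⟩ := by subst h; rfl

lemma bridge {V : ℤ → Type} [∀ i, AddCommGroup (V i)]
    (U : ∀ i : ℤ, V i →+ V (i + 2)) (n : ℕ) (i : ℤ) (x : V i) :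
    (⟨i + 2 * n, iterU U n i x⟩ : Σ i : ℤ, V i) = (Tmap U)^[n] ⟨i, x⟩ := by
  induction n generalizing i x with
  | zero => exact sigma_cast (by push_cast; ring) x
  | succ n ih =>
    rw [Function.iterate_succ_apply]
    show (⟨i + 2 * ((n : ℕ) + 1 : ℕ), cast _ (iterU U n (i + 2) (U i x))⟩ : Σ i : ℤ, V i)
      = (Tmap U)^[n] ⟨i + 2, U i x⟩
    rw [sigma_cast (show i + 2 + 2 * (n : ℤ) = i + 2 * ((n : ℕ) + 1 : ℕ) by push_cast; ring)]
    exact ih (i + 2) (U i x)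

lemma Tmap_fst {V : ℤ → Type} [∀ i, AddCommGroup (V i)]
    (U : ∀ i : ℤ, V i →+ V (i + 2)) (n : ℕ) (p : Σ i : ℤ, V i) :
    ((Tmap U)^[n] p).1 = p.1 + 2 * n := by
  induction n generalizing p with
  | zero => simp
  | succ n ih =>
    rw [Function.iterate_succ_apply, ih]
    show (p.1 + 2) + 2 * (n : ℤ) = p.1 + 2 * ((n : ℕ) + 1 : ℕ)
    push_cast; ring

lemma Tmap_zero_mono {V : ℤ → Type} [∀ i, AddCommGroup (V i)]
    (U : ∀ i : ℤ, V i →+ V (i + 2)) (p : Σ i : ℤ, V i) {a b : ℕ} (hab : a ≤ b)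
    (h : ((Tmap U)^[a] p).2 = 0) : ((Tmap U)^[b] p).2 = 0 := by
  obtain ⟨c, rfl⟩ := Nat.exists_eq_add_of_le hab
  rw [Nat.add_comm, Function.iterate_add_apply]
  induction c with
  | zero => exact h
  | succ c ih =>
    rw [Function.iterate_succ_apply']
    show U _ _ = 0
    rw [ih (by omega), map_zero]

/-- If a ℤ-graded family of abelian groups vanishes in degrees below `N` and the
degree-2 maps `U i` have (jointly) finite kernel, then torsion orders are bounded:
there is `n₀` with `U^{(n₀)} x = 0` whenever `U^{(n)} x = 0` for some `n ≥ 1`. -/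
theorem bounded_torsion_order (N : ℤ) (V : ℤ → Type) [∀ i, AddCommGroup (V i)]
    (htriv : ∀ i : ℤ, i < N → ∀ x : V i, x = 0)
    (U : ∀ i : ℤ, V i →+ V (i + 2))
    (hker : {p : Σ i : ℤ, V i | p.2 ≠ 0 ∧ U p.1 p.2 = 0}.Finite) :
    ∃ n₀ : ℕ, ∀ (i : ℤ) (x : V i),
      (∃ n : ℕ, 1 ≤ n ∧ iterU U n i x = 0) → iterU U n₀ i x = 0 := by
  classical
  obtain ⟨M, hM⟩ := (hker.image Sigma.fst).bddAbove
  refine ⟨(M - N).toNat + 1, ?_⟩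
  rintro i x ⟨n, -, hn⟩
  set p : Σ i : ℤ, V i := ⟨i, x⟩ with hp
  have key : ∃ m, ((Tmap U)^[m] p).2 = 0 := ⟨n, by rw [← bridge U n i x]; exact hn⟩
  suffices h : ((Tmap U)^[(M - N).toNat + 1] p).2 = 0 by
    rw [← bridge U _ i x] at h; exact h
  have hm := Nat.find_spec key
  apply Tmap_zero_mono U p ?_ hm
  rcases Nat.eq_zero_or_pos (Nat.find key) with h0 | hpos
  · omega
  · obtain ⟨k, hk⟩ : ∃ k, Nat.find key = k + 1 := ⟨Nat.find key - 1, by omega⟩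
    set q := (Tmap U)^[k] p with hq
    have hq2 : q.2 ≠ 0 := Nat.find_min key (by omega)
    have hTq : (Tmap U q).2 = 0 := by
      show (Tmap U ((Tmap U)^[k] p)).2 = 0
      rw [show Tmap U ((Tmap U)^[k] p) = (Tmap U)^[k + 1] p from
        (Function.iterate_succ_apply' _ _ _).symm, ← hk]
      exact hm
    have hqker : q ∈ {p : Σ i : ℤ, V i | p.2 ≠ 0 ∧ U p.1 p.2 = 0} := ⟨hq2, hTq⟩
    have hq1 : q.1 ≤ M := hM ⟨q, hqker, rfl⟩
    have hq1' : q.1 = i + 2 * k := Tmap_fst U k p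
    have hx : x ≠ 0 := by
      intro h
      have : ((Tmap U)^[0] p).2 = 0 := h
      have := Nat.find_min' key this
      omega
    have hiN : N ≤ i := by
      by_contra h
      exact hx (htriv i (by omega) x)
    have : (k : ℤ) ≤ M - N := by
      have : (k : ℤ) ≤ 2 * k := by omega
      omega
    omega
end

section
/- Let 𝔽₂ = ZMod 2 and let R = 𝔽₂[X] be the polynomial ring in one variable. Let M be an R-module and suppose there exist R-linear maps f : R → M and g : M → R and natural numbers i and k such that g (f r) = X^i · r for every r ∈ R, and X^k • (f (g y)) = X^(k+i) • y for every y ∈ M. Then Module.rank R M = 1, i.e. the maximal cardinality of an R-linearly independent subset of M equals one. -/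
open Polynomial

/-- Algebraic mechanism of the rank theorem: if there are `𝔽₂[X]`-linear maps
`f : 𝔽₂[X] → M`, `g : M → 𝔽₂[X]` with `g ∘ f = X^i · id` and
`X^k · (f ∘ g) = X^(k+i) · id`, then `M` has rank one over `𝔽₂[X]`. -/
theorem rank_one_of_localized_iso (M : Type) [AddCommGroup M]
    [Module (Polynomial (ZMod 2)) M]
    (f : Polynomial (ZMod 2) →ₗ[Polynomial (ZMod 2)] M)
    (g : M →ₗ[Polynomial (ZMod 2)] Polynomial (ZMod 2)) (i k : ℕ)
    (hgf : ∀ r : Polynomial (ZMod 2), g (f r) = X ^ i * r)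
    (hfg : ∀ y : M, (X ^ k : Polynomial (ZMod 2)) • f (g y) =
      (X ^ (k + i) : Polynomial (ZMod 2)) • y) :
    Module.rank (Polynomial (ZMod 2)) M = 1 := by
  set R := Polynomial (ZMod 2)
  have hX : (X : R) ≠ 0 := X_ne_zero
  have hXki : (X : R) ^ (k + i) ≠ 0 := pow_ne_zero _ hX
  have htwo : (2 : R) = 0 := by
    have := CharP.cast_eq_zero R 2
    exact_mod_cast this
  -- key: no two elements are linearly independent
  have key : ∀ y z : M, ¬ LinearIndependent R ![y, z] := by
    intro y z hli
    rw [LinearIndependent.pair_iff] at hli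
    by_cases hgy : g y = 0
    · -- then X^(k+i) • y = 0
      have h0 : (X ^ (k + i) : R) • y + (0 : R) • z = 0 := by
        rw [← hfg y, hgy, map_zero, smul_zero, zero_smul, add_zero]
      exact hXki (hli _ _ h0).1
    · have h0 : ((X ^ (k + i) : R) * g z) • y + ((X ^ (k + i) : R) * g y) • z = 0 := by
        have h1 : ((X ^ (k + i) : R) * g z) • y = (X ^ k : R) • f (g z * g y) := by
          rw [mul_comm, mul_smul, ← hfg y, smul_comm, ← map_smul, smul_eq_mul]
        have h2 : ((X ^ (k + i) : R) * g y) • z = (X ^ k : R) • f (g y * g z) := by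
          rw [mul_comm, mul_smul, ← hfg z, smul_comm, ← map_smul, smul_eq_mul]
        rw [h1, h2, mul_comm (g y), ← smul_add, ← two_smul R, htwo, zero_smul, smul_zero]
      exact hgy (by
        have := (hli _ _ h0).2
        exact (mul_eq_zero.mp this).resolve_left hXki)
  have hle : Module.rank R M ≤ 1 := by
    apply rank_le
    intro s hs
    by_contra hcard
    push_neg at hcard
    obtain ⟨y, hy, z, hz, hyz⟩ := Finset.one_lt_card.mp hcard
    have hinj : Function.Injective (![(⟨y, hy⟩ : s), ⟨z, hz⟩] : Fin 2 → s) := by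
      intro a b hab
      fin_cases a <;> fin_cases b <;>
        first
        | rfl
        | (exfalso; apply hyz
           first
           | simpa [Subtype.ext_iff] using hab
           | exact (by simpa [Subtype.ext_iff] using hab : z = y).symm)
    have := hs.comp _ hinj
    have heq : ((fun i : s => (i : M)) ∘ ![(⟨y, hy⟩ : s), ⟨z, hz⟩]) = ![y, z] := by
      funext j; fin_cases j <;> rfl
    rw [heq] at this
    exact key y z this
  have hge : 1 ≤ Module.rank R M := by
    have hli : LinearIndependent R (fun _ : Unit => f 1) := by
      rw [Fintype.linearIndependent_iff]
      intro c hc u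
      have hc' : c () • f 1 = 0 := by simpa using hc
      have : g (c () • f 1) = 0 := by rw [hc']; exact map_zero g
      rw [map_smul, hgf 1, mul_one, smul_eq_mul] at this
      have := (mul_eq_zero.mp this).resolve_right (pow_ne_zero _ hX)
      simpa using this
    simpa using hli.cardinal_le_rank
  exact le_antisymm hle hge
end
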